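/- arXiv:2001.09139 — 2 statements merged into one kernel-verified Lean document; each statement's English description precedes it below -/
import Mathlib

section
/- Let Z: Λ → ℂ be a group homomorphism from a finitely generated abelian group, and let Q be a quadratic form on Λ ⊗ ℝ that is negative definite on ker Z ⊗ ℝ. Suppose v₁, v₂ ∈ Λ satisfy Q(v₁) ≥ 0, Q(v₂) ≥ 0, Z(v₁) and Z(v₂) lie on the same ray ℝ_{>0}·e^{iπφ} in ℂ. Then Q(a v₁ + b v₂) ≥ 0 for all real a, b ≥ 0. -/
/-!
If `Z v₁` and `Z v₂` lie on the same open ray, say `Z v₁ = r₁ z` and `Z v₂ = r₂ z` with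
`r₁, r₂ > 0`, then `w = v₁ - (r₁ / r₂) v₂` lies in `ker Z`, so `Q w ≤ 0`. Expanding,
`Q w = Q v₁ + c² Q v₂ - c · polar Q v₁ v₂` with `c = r₁ / r₂ > 0`, which forces
`polar Q v₁ v₂ ≥ 0`. Then `Q (a v₁ + b v₂) = a² Q v₁ + b² Q v₂ + a b · polar Q v₁ v₂ ≥ 0`.
-/

namespace QuadraticMap

variable {R M : Type*} [CommRing R] [AddCommGroup M] [Module R M]

theorem map_sub_smul (Q : QuadraticForm R M) (u v : M) (c : R) :
    Q (u - c • v) = Q u + c ^ 2 * Q v - c * polar Q u v := by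
  rw [sub_eq_add_neg, QuadraticMap.map_add Q, QuadraticMap.map_neg, QuadraticMap.map_smul,
    polar_neg_right, polar_smul_right, smul_eq_mul, smul_eq_mul]
  ring

theorem map_smul_add_smul (Q : QuadraticForm R M) (u v : M) (a b : R) :
    Q (a • u + b • v) = a ^ 2 * Q u + b ^ 2 * Q v + a * b * polar Q u v := by
  rw [QuadraticMap.map_add Q, QuadraticMap.map_smul, QuadraticMap.map_smul, polar_smul_left,
    polar_smul_right, smul_eq_mul, smul_eq_mul, smul_eq_mul, smul_eq_mul]
  ring

section Ordered

variable [LinearOrder R] [IsStrictOrderedRing R]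

theorem polar_nonneg_of_map_sub_smul_nonpos (Q : QuadraticForm R M) {u v : M} {c : R}
    (hc : 0 < c) (hu : 0 ≤ Q u) (hv : 0 ≤ Q v) (huv : Q (u - c • v) ≤ 0) :
    0 ≤ polar Q u v := by
  rw [map_sub_smul] at huv
  have : 0 ≤ c * polar Q u v := by nlinarith [sq_nonneg c]
  exact nonneg_of_mul_nonneg_right (by linarith) hc

theorem map_smul_add_smul_nonneg (Q : QuadraticForm R M) {u v : M} (hu : 0 ≤ Q u)
    (hv : 0 ≤ Q v) (huv : 0 ≤ polar Q u v) {a b : R} (ha : 0 ≤ a) (hb : 0 ≤ b) :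
    0 ≤ Q (a • u + b • v) := by
  rw [map_smul_add_smul]
  positivity

end Ordered

end QuadraticMap

theorem LinearMap.map_sub_div_smul_eq_zero {K M N : Type*} [Field K] [AddCommGroup M]
    [Module K M] [AddCommGroup N] [Module K N] (Z : M →ₗ[K] N) {u v : M} {z : N} {r₁ r₂ : K}
    (hr₂ : r₂ ≠ 0) (hu : Z u = r₁ • z) (hv : Z v = r₂ • z) :
    Z (u - (r₁ / r₂) • v) = 0 := by
  rw [map_sub, map_smul, hu, hv, smul_smul, div_mul_cancel₀ _ hr₂, sub_self]

theorem stmt_12_general {Λ : Type*} [AddCommGroup Λ] [Module ℝ Λ]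
    (Z : Λ →ₗ[ℝ] ℂ) (Q : QuadraticForm ℝ Λ)
    (hneg : ∀ w : Λ, w ≠ 0 → Z w = 0 → Q w < 0)
    (v₁ v₂ : Λ) (h₁ : 0 ≤ Q v₁) (h₂ : 0 ≤ Q v₂)
    (φ : ℝ) (r₁ r₂ : ℝ) (hr₁ : 0 < r₁) (hr₂ : 0 < r₂)
    (hZ₁ : Z v₁ = r₁ * Complex.exp (Real.pi * φ * Complex.I))
    (hZ₂ : Z v₂ = r₂ * Complex.exp (Real.pi * φ * Complex.I)) :
    ∀ a b : ℝ, 0 ≤ a → 0 ≤ b → 0 ≤ Q (a • v₁ + b • v₂) := by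
  intro a b ha hb
  have hker : Z (v₁ - (r₁ / r₂) • v₂) = 0 :=
    Z.map_sub_div_smul_eq_zero hr₂.ne' (by rw [hZ₁, Complex.real_smul])
      (by rw [hZ₂, Complex.real_smul])
  have hnonpos : Q (v₁ - (r₁ / r₂) • v₂) ≤ 0 := by
    by_cases hw : v₁ - (r₁ / r₂) • v₂ = 0
    · rw [hw, QuadraticMap.map_zero]
    · exact (hneg _ hw hker).le
  have hpolar := Q.polar_nonneg_of_map_sub_smul_nonpos (div_pos hr₁ hr₂) h₁ h₂ hnonpos
  exact Q.map_smul_add_smul_nonneg h₁ h₂ hpolar ha hb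

/-- Support-property gluing: let `Z : Λ → ℂ` be (the real-linear extension to `Λ ⊗ ℝ` of)
a group homomorphism from a finitely generated abelian group, and `Q` a quadratic form on
`Λ ⊗ ℝ` which is negative definite on `ker Z`. If `v₁, v₂` satisfy `Q v₁ ≥ 0`,
`Q v₂ ≥ 0`, and `Z v₁`, `Z v₂` lie on the same ray `ℝ_{>0} · e^{iπφ}` in `ℂ`, then
`Q (a • v₁ + b • v₂) ≥ 0` for all reals `a, b ≥ 0`. -/
theorem stmt_12 {Λ : Type*} [AddCommGroup Λ] [Module ℝ Λ] [FiniteDimensional ℝ Λ]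
    (Z : Λ →ₗ[ℝ] ℂ) (Q : QuadraticForm ℝ Λ)
    (hneg : ∀ w : Λ, w ≠ 0 → Z w = 0 → Q w < 0)
    (v₁ v₂ : Λ) (h₁ : 0 ≤ Q v₁) (h₂ : 0 ≤ Q v₂)
    (φ : ℝ) (r₁ r₂ : ℝ) (hr₁ : 0 < r₁) (hr₂ : 0 < r₂)
    (hZ₁ : Z v₁ = r₁ * Complex.exp (Real.pi * φ * Complex.I))
    (hZ₂ : Z v₂ = r₂ * Complex.exp (Real.pi * φ * Complex.I)) :
    ∀ a b : ℝ, 0 ≤ a → 0 ≤ b → 0 ≤ Q (a • v₁ + b • v₂) :=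
  stmt_12_general Z Q hneg v₁ v₂ h₁ h₂ φ r₁ r₂ hr₁ hr₂ hZ₁ hZ₂
end

section
/- Let Z: K → ℂ be an additive stability function on an abelian category A (i.e., Z(E) ∈ ℝ_{>0}·e^{iπφ(E)} with φ(E) ∈ (0,1] for all nonzero E) such that the image of Im Z is a discrete subgroup of ℝ and A is Noetherian. Then every object of A admits a Harder–Narasimhan filtration with respect to Z. -/
open CategoryTheory CategoryTheory.Limits

variable {C : Type*} [Category C] [Abelian C]

/-- `Z A` has phase at most the phase of `Z B`: for nonzero complex numbers
`r₁ e^{iπφ₁}` and `r₂ e^{iπφ₂}` with `φ₁, φ₂ ∈ (0,1]` this is equivalent to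
`φ₁ ≤ φ₂`. -/
def phaseLE (Z : C → ℂ) (A B : C) : Prop :=
  (Z A * (starRingEnd ℂ) (Z B)).im ≤ 0

/-- Strict phase comparison. -/
def phaseLT (Z : C → ℂ) (A B : C) : Prop :=
  (Z A * (starRingEnd ℂ) (Z B)).im < 0

/-- An object is `Z`-semistable if it is nonzero and no nonzero subobject has strictly
larger phase. -/
def Semistable (Z : C → ℂ) (X : C) : Prop :=
  ¬ Limits.IsZero X ∧ ∀ A : Subobject X, ¬ Limits.IsZero (A : C) → phaseLE Z (A : C) X

/-- A filtration `0 = E₀ ⊆ E₁ ⊆ ... ⊆ Eₙ = X` by subobjects. -/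
structure SubobjectFiltration (X : C) where
  n : ℕ
  s : Fin (n + 1) → Subobject X
  mono : Monotone s
  bot : s 0 = ⊥
  top : s (Fin.last n) = ⊤

/-- The `i`-th factor `E_{i+1}/E_i` of a filtration. -/
noncomputable def SubobjectFiltration.factor {X : C} (Fl : SubobjectFiltration X)
    (i : Fin Fl.n) : C :=
  cokernel (Subobject.ofLE (Fl.s i.castSucc) (Fl.s i.succ)
    (Fl.mono (le_of_lt (Fin.castSucc_lt_succ (i := i)))))

/-!
The phase of a nonzero object `E` is `arg (Z E) ∈ (0, π]`, and along a short exact sequence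
`0 → A → E → Q → 0` the phase of `E` lies between those of `A` and `Q` (seesaw). Passing from
`E` to a subobject of strictly larger phase lowers `Im Z` by at least `ε`, because the quotient
then has nonzero imaginary part; so after finitely many steps one reaches a subobject of maximal
phase, and by Noetherianity a largest one, the maximal destabilizing subobject `M ⊆ E`. It is
semistable and every subobject of `E/M` has strictly smaller phase. The HN filtration is built by
descending induction on `A : Subobject X` (Noetherianity again): the filtration of `X/A` starts
with the maximal destabilizing subobject `M ⊆ X/A` and continues with the filtration of `X/A/M`.
-/

namespace Complex

/-- Bridgeland's `H = {r e^{iπφ} | r > 0, 0 < φ ≤ 1}`. -/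
def semiclosedUpperHalfPlane : Set ℂ := {z | 0 < z.im ∨ (z.im = 0 ∧ z.re < 0)}

variable {z w : ℂ}

lemma ne_zero_of_mem_semiclosedUpperHalfPlane (hz : z ∈ semiclosedUpperHalfPlane) : z ≠ 0 := by
  rintro rfl
  rcases hz with h | ⟨-, h⟩ <;> simp at h

lemma im_nonneg_of_mem_semiclosedUpperHalfPlane (hz : z ∈ semiclosedUpperHalfPlane) :
    0 ≤ z.im := by
  rcases hz with h | ⟨h, -⟩
  exacts [h.le, h.ge]

lemma arg_pos_of_mem_semiclosedUpperHalfPlane (hz : z ∈ semiclosedUpperHalfPlane) :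
    0 < z.arg := by
  rcases hz with h | ⟨h, h'⟩
  · exact (arg_nonneg_iff.2 h.le).lt_of_ne fun h0 => h.ne' (arg_eq_zero_iff.1 h0.symm).2
  · rw [arg_eq_pi_iff.2 ⟨h', h⟩]
    exact Real.pi_pos

lemma arg_eq_pi_of_mem_semiclosedUpperHalfPlane (hz : z ∈ semiclosedUpperHalfPlane)
    (h : z.im = 0) : z.arg = Real.pi := by
  rcases hz with h' | ⟨-, h'⟩
  · exact absurd h h'.ne'
  · exact arg_eq_pi_iff.2 ⟨h', h⟩

lemma add_mem_semiclosedUpperHalfPlane (hz : z ∈ semiclosedUpperHalfPlane)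
    (hw : w ∈ semiclosedUpperHalfPlane) : z + w ∈ semiclosedUpperHalfPlane := by
  rcases hz with hz | ⟨hz, hz'⟩ <;> rcases hw with hw | ⟨hw, hw'⟩
  · exact Or.inl (by simp; linarith)
  · exact Or.inl (by simp; linarith)
  · exact Or.inl (by simp; linarith)
  · exact Or.inr ⟨by simp [hz, hw], by simp; linarith⟩

lemma im_mul_conj_eq_mul_sin (z w : ℂ) :
    (z * starRingEnd ℂ w).im = ‖z‖ * ‖w‖ * Real.sin (z.arg - w.arg) := by
  rw [Real.sin_sub]
  simp only [mul_im, conj_re, conj_im]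
  rw [← norm_mul_sin_arg z, ← norm_mul_cos_arg z, ← norm_mul_sin_arg w,
    ← norm_mul_cos_arg w]
  ring

lemma im_mul_conj_neg_iff_arg_lt (hz : z ∈ semiclosedUpperHalfPlane)
    (hw : w ∈ semiclosedUpperHalfPlane) : (z * starRingEnd ℂ w).im < 0 ↔ z.arg < w.arg := by
  have hzw : 0 < ‖z‖ * ‖w‖ := by
    have := ne_zero_of_mem_semiclosedUpperHalfPlane hz
    have := ne_zero_of_mem_semiclosedUpperHalfPlane hw
    positivity
  have h₁ := arg_pos_of_mem_semiclosedUpperHalfPlane hz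
  have h₂ := arg_pos_of_mem_semiclosedUpperHalfPlane hw
  have h₃ := arg_le_pi z
  have h₄ := arg_le_pi w
  rw [im_mul_conj_eq_mul_sin, mul_neg_iff, and_iff_right hzw, or_iff_left fun h => h.1.not_gt hzw]
  constructor
  · intro h
    by_contra! h'
    exact h.not_ge (Real.sin_nonneg_of_nonneg_of_le_pi (by linarith) (by linarith))
  · intro h
    exact Real.sin_neg_of_neg_of_neg_pi_lt (by linarith) (by linarith)

lemma im_mul_conj_nonpos_iff_arg_le (hz : z ∈ semiclosedUpperHalfPlane)
    (hw : w ∈ semiclosedUpperHalfPlane) :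
    (z * starRingEnd ℂ w).im ≤ 0 ↔ z.arg ≤ w.arg := by
  have h := im_mul_conj_neg_iff_arg_lt hw hz
  have hswap : (w * starRingEnd ℂ z).im = -(z * starRingEnd ℂ w).im := by
    simp only [mul_im, conj_re, conj_im]
    ring
  rw [hswap, neg_lt_zero] at h
  rw [← not_lt, ← not_lt, h]

lemma arg_add_lt_iff {a c : ℂ} (ha : a ∈ semiclosedUpperHalfPlane)
    (hc : c ∈ semiclosedUpperHalfPlane) : (a + c).arg < a.arg ↔ c.arg < a.arg := by
  rw [← im_mul_conj_neg_iff_arg_lt (add_mem_semiclosedUpperHalfPlane ha hc) ha,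
    ← im_mul_conj_neg_iff_arg_lt hc ha, add_mul, add_im, mul_conj, ofReal_im, zero_add]

lemma arg_lt_arg_add_iff {a c : ℂ} (ha : a ∈ semiclosedUpperHalfPlane)
    (hc : c ∈ semiclosedUpperHalfPlane) : c.arg < (a + c).arg ↔ c.arg < a.arg := by
  rw [← im_mul_conj_neg_iff_arg_lt hc (add_mem_semiclosedUpperHalfPlane ha hc),
    ← im_mul_conj_neg_iff_arg_lt hc ha, map_add, mul_add, add_im, mul_conj, ofReal_im, add_zero]

end Complex

namespace CategoryTheory.Subobject

lemma not_isZero_top {D : Type*} [Category D] [HasZeroMorphisms D] {E : D} (hE : ¬ IsZero E) :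
    ¬ IsZero ((⊤ : Subobject E) : D) :=
  fun h => hE (h.of_iso (asIso (⊤ : Subobject E).arrow).symm)

noncomputable def cokernelOfLECongr {X : C} {A P Q : Subobject X} (hAP : A ≤ P) (h : P = Q) :
    cokernel (ofLE A P hAP) ≅ cokernel (ofLE A Q (h ▸ hAP)) :=
  eqToIso (by subst h; rfl)

lemma not_isZero_cokernel_arrow {X : C} {A : Subobject X} (hA : A ≠ ⊤) :
    ¬ IsZero (cokernel A.arrow) :=
  fun h => hA <| (isIso_arrow_iff_eq_top A).1 <|
    have := Preadditive.epi_of_isZero_cokernel _ h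
    isIso_of_mono_of_epi _

variable {X : C} (A : Subobject X) (B : Subobject (cokernel A.arrow))

noncomputable abbrev quotientPreimage : Subobject X :=
  (Subobject.pullback (cokernel.π A.arrow)).obj B

lemma le_quotientPreimage : A ≤ quotientPreimage A B :=
  le_of_comm ((isPullback _ B).lift 0 A.arrow (by simp)) (IsPullback.lift_snd _ _ _ _)

lemma ofLE_comp_pullbackπ :
    ofLE A _ (le_quotientPreimage A B) ≫ pullbackπ (cokernel.π A.arrow) B = 0 := by
  rw [← cancel_mono B.arrow, Category.assoc, (isPullback _ B).w, ofLE_arrow_assoc,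
    cokernel.condition, zero_comp]

/-- `0 ⟶ A ⟶ quotientPreimage A B ⟶ B ⟶ 0` -/
noncomputable abbrev quotientPreimageShortComplex : ShortComplex C :=
  ShortComplex.mk _ _ (ofLE_comp_pullbackπ A B)

lemma quotientPreimageShortComplex_shortExact : (quotientPreimageShortComplex A B).ShortExact := by
  have : Epi (pullbackπ (cokernel.π A.arrow) B) :=
    Abelian.epi_fst_of_isLimit _ _ (isPullback _ B).isLimit
  refine ShortComplex.ShortExact.mk' ?_ inferInstance this
  rw [ShortComplex.exact_iff_exact_up_to_refinements]
  intro T x hx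
  have hx' : (x ≫ (quotientPreimage A B).arrow) ≫ cokernel.π A.arrow = 0 := by
    rw [Category.assoc, ← (isPullback _ B).w, reassoc_of% hx, zero_comp]
  refine ⟨T, 𝟙 T, inferInstance, Abelian.monoLift A.arrow _ hx', ?_⟩
  rw [← cancel_mono (quotientPreimage A B).arrow]
  simp

noncomputable def cokernelOfLEQuotientPreimageIso :
    cokernel (ofLE A _ (le_quotientPreimage A B)) ≅ B :=
  (cokernelIsCokernel _).coconePointUniqueUpToIso
    (quotientPreimageShortComplex_shortExact A B).gIsCokernel

lemma lt_quotientPreimage (hB : ¬ IsZero (B : C)) : A < quotientPreimage A B := by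
  refine (le_quotientPreimage A B).lt_of_ne fun h => hB ?_
  have : IsIso (quotientPreimageShortComplex A B).f :=
    ⟨ofLE _ _ h.ge, by simp [ofLE_comp_ofLE, ofLE_refl], by simp [ofLE_comp_ofLE, ofLE_refl]⟩
  exact (quotientPreimageShortComplex_shortExact A B).isIso_f_iff.1 this

noncomputable def cokernelQuotientPreimageIso :
    cokernel (quotientPreimage A B).arrow ≅ cokernel B.arrow := by
  have sq := (isPullback (cokernel.π A.arrow) B).flip
  have := Abelian.mono_cokernel_map_of_isPullback sq
  have : Epi (cokernel.map _ _ _ _ sq.w) := epi_of_epi_fac (cokernel.π_desc _ _ _)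
  have := isIso_of_mono_of_epi (cokernel.map _ _ _ _ sq.w)
  exact asIso (cokernel.map _ _ _ _ sq.w)

end CategoryTheory.Subobject

open Complex

structure StabilityFunction (C : Type*) [Category C] [Abelian C] where
  Z : C → ℂ
  map_add : ∀ S : ShortComplex C, S.ShortExact → Z S.X₂ = Z S.X₁ + Z S.X₃
  mem_semiclosedUpperHalfPlane : ∀ X : C, ¬ IsZero X → Z X ∈ semiclosedUpperHalfPlane

namespace StabilityFunction

variable (σ : StabilityFunction C)

/-- `π` times Bridgeland's phase `φ(X) ∈ (0, 1]`. -/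
noncomputable def phase (X : C) : ℝ := (σ.Z X).arg

lemma map_eq_zero_of_isZero {X : C} (hX : IsZero X) : σ.Z X = 0 := by
  have hS : (ShortComplex.mk (𝟙 X) (𝟙 X) (hX.eq_of_src _ _)).ShortExact :=
    .mk' (ShortComplex.exact_of_isZero_X₂ _ hX) inferInstance inferInstance
  simpa using σ.map_add _ hS

lemma map_eq_add_cokernel {Y X : C} (f : Y ⟶ X) [Mono f] :
    σ.Z X = σ.Z Y + σ.Z (cokernel f) :=
  σ.map_add (.mk f (cokernel.π f) (cokernel.condition f))
    (.mk' (ShortComplex.exact_of_g_is_cokernel _ (cokernelIsCokernel f)) inferInstance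
      inferInstance)

lemma map_iso {X Y : C} (e : X ≅ Y) : σ.Z X = σ.Z Y := by
  rw [σ.map_eq_add_cokernel e.hom, σ.map_eq_zero_of_isZero (isZero_cokernel_of_epi e.hom),
    add_zero]

lemma phase_iso {X Y : C} (e : X ≅ Y) : σ.phase X = σ.phase Y := by
  rw [phase, phase, σ.map_iso e]

lemma map_ne_zero {X : C} (hX : ¬ IsZero X) : σ.Z X ≠ 0 :=
  ne_zero_of_mem_semiclosedUpperHalfPlane (σ.mem_semiclosedUpperHalfPlane X hX)

lemma phase_le_pi (X : C) : σ.phase X ≤ Real.pi := arg_le_pi _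

lemma phaseLE_iff {X Y : C} (hX : ¬ IsZero X) (hY : ¬ IsZero Y) :
    phaseLE σ.Z X Y ↔ σ.phase X ≤ σ.phase Y :=
  im_mul_conj_nonpos_iff_arg_le (σ.mem_semiclosedUpperHalfPlane X hX)
    (σ.mem_semiclosedUpperHalfPlane Y hY)

lemma phaseLT_iff {X Y : C} (hX : ¬ IsZero X) (hY : ¬ IsZero Y) :
    phaseLT σ.Z X Y ↔ σ.phase X < σ.phase Y :=
  im_mul_conj_neg_iff_arg_lt (σ.mem_semiclosedUpperHalfPlane X hX)
    (σ.mem_semiclosedUpperHalfPlane Y hY)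

section Seesaw

variable {X₁ X₂ X₃ : C} (h : σ.Z X₂ = σ.Z X₁ + σ.Z X₃) (h₁ : ¬ IsZero X₁)
  (h₃ : ¬ IsZero X₃)
include h h₁ h₃

lemma phase_middle_lt_iff : σ.phase X₂ < σ.phase X₁ ↔ σ.phase X₃ < σ.phase X₁ := by
  rw [phase, phase, h]
  exact arg_add_lt_iff (σ.mem_semiclosedUpperHalfPlane X₁ h₁)
    (σ.mem_semiclosedUpperHalfPlane X₃ h₃)

lemma lt_phase_middle_iff : σ.phase X₃ < σ.phase X₂ ↔ σ.phase X₃ < σ.phase X₁ := by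
  rw [phase, phase, h]
  exact arg_lt_arg_add_iff (σ.mem_semiclosedUpperHalfPlane X₁ h₁)
    (σ.mem_semiclosedUpperHalfPlane X₃ h₃)

end Seesaw

lemma exists_subobject_map_eq {Y X : C} (f : Y ⟶ X) [Mono f] (hY : ¬ IsZero Y) :
    ∃ T : Subobject X, ¬ IsZero (T : C) ∧ σ.Z T = σ.Z Y :=
  ⟨Subobject.mk f, fun h => hY (h.of_iso (Subobject.underlyingIso f).symm),
    σ.map_iso (Subobject.underlyingIso f)⟩

lemma semistable_of_iso {X Y : C} (e : X ≅ Y) (hX : Semistable σ.Z X) : Semistable σ.Z Y := by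
  refine ⟨fun h => hX.1 (h.of_iso e), fun S hS => ?_⟩
  obtain ⟨T, hT, hTS⟩ := σ.exists_subobject_map_eq (S.arrow ≫ e.inv) hS
  have := hX.2 T hT
  rwa [phaseLE, hTS, σ.map_iso e] at this

def IsMaxPhaseSubobject {E : C} (M : Subobject E) : Prop :=
  ¬ IsZero (M : C) ∧ ∀ B : Subobject E, ¬ IsZero (B : C) → σ.phase B ≤ σ.phase M

variable {σ}

lemma phase_top (E : C) : σ.phase ((⊤ : Subobject E) : C) = σ.phase E :=
  σ.phase_iso (asIso (⊤ : Subobject E).arrow)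

lemma isMaxPhaseSubobject_top {E : C} (hE : ¬ IsZero E)
    (h : ∀ B : Subobject E, ¬ IsZero (B : C) → σ.phase B ≤ σ.phase E) :
    σ.IsMaxPhaseSubobject (⊤ : Subobject E) :=
  ⟨Subobject.not_isZero_top hE, fun B hB => (phase_top E).symm ▸ h B hB⟩

lemma IsMaxPhaseSubobject.phase_le {E : C} {M : Subobject E} (hM : σ.IsMaxPhaseSubobject M)
    (hE : ¬ IsZero E) : σ.phase E ≤ σ.phase M :=
  phase_top (σ := σ) E ▸ hM.2 ⊤ (Subobject.not_isZero_top hE)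

lemma IsMaxPhaseSubobject.semistable {E : C} {M : Subobject E} (hM : σ.IsMaxPhaseSubobject M) :
    Semistable σ.Z M := by
  refine ⟨hM.1, fun S hS => ?_⟩
  obtain ⟨T, hT, hTS⟩ := σ.exists_subobject_map_eq (S.arrow ≫ M.arrow) hS
  rw [σ.phaseLE_iff hS hM.1, phase, ← hTS]
  exact hM.2 T hT

lemma exists_gt_phase_lt {E : C} {M : Subobject E} (hM : ¬ IsZero (M : C))
    {I : Subobject (cokernel M.arrow)} (hI : ¬ IsZero (I : C)) :
    ∃ P : Subobject E, M < P ∧ ¬ IsZero (P : C) ∧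
      (σ.phase P < σ.phase M → σ.phase I < σ.phase P) := by
  have hlt := Subobject.lt_quotientPreimage M I hI
  have hP : ¬ IsZero (Subobject.quotientPreimage M I : C) :=
    fun h => hM (h.of_mono (Subobject.ofLE _ _ hlt.le))
  have hsum := σ.map_add _ (Subobject.quotientPreimageShortComplex_shortExact M I)
  refine ⟨_, hlt, hP, fun h => ?_⟩
  exact (σ.lt_phase_middle_iff hsum hM hI).2 ((σ.phase_middle_lt_iff hsum hM hI).1 h)

lemma phase_lt_of_maximal {E : C} {M : Subobject E} (hM : ¬ IsZero (M : C))
    (hME : σ.phase E < σ.phase M)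
    (hmax : ∀ P : Subobject E, M < P → ¬ IsZero (P : C) → σ.phase P ≤ σ.phase E)
    (I : Subobject (cokernel M.arrow)) (hI : ¬ IsZero (I : C)) : σ.phase I < σ.phase E := by
  obtain ⟨P, hMP, hP, hIP⟩ := exists_gt_phase_lt (σ := σ) hM hI
  have hPE := hmax P hMP hP
  linarith [hIP (by linarith)]

lemma exists_subobject_phase_le {E : C} (M : Subobject E) {B : Subobject E}
    (hB : ¬ IsZero (B : C))
    (hQ : ∀ I : Subobject (cokernel M.arrow), ¬ IsZero (I : C) → σ.phase I < σ.phase B) :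
    ∃ T : Subobject (M : C), ¬ IsZero (T : C) ∧ σ.phase B ≤ σ.phase T := by
  set f := B.arrow ≫ cokernel.π M.arrow
  have hsum := σ.map_eq_add_cokernel (kernel.ι f)
  have hK : ¬ IsZero (kernel f) ∧ σ.phase B ≤ σ.phase (kernel f) := by
    by_cases hC : IsZero (Abelian.coimage f)
    · rw [σ.map_eq_zero_of_isZero hC, add_zero] at hsum
      exact ⟨fun hK => σ.map_ne_zero hB (hsum.trans (σ.map_eq_zero_of_isZero hK)),
        (congrArg arg hsum).le⟩
    · obtain ⟨I, hI, hIC⟩ :=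
        σ.exists_subobject_map_eq ((Abelian.coimageIsoImage f).hom ≫ Abelian.image.ι f) hC
      have hCB : σ.phase (Abelian.coimage f) < σ.phase B := by
        simpa only [phase, hIC] using hQ I hI
      have hK : ¬ IsZero (kernel f) := fun hK => by
        rw [σ.map_eq_zero_of_isZero hK, zero_add] at hsum
        exact hCB.ne (congrArg arg hsum).symm
      exact ⟨hK, ((σ.phase_middle_lt_iff hsum hK hC).2
        ((σ.lt_phase_middle_iff hsum hK hC).1 hCB)).le⟩
  have hKM : (kernel.ι f ≫ B.arrow) ≫ cokernel.π M.arrow = 0 := by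
    simp only [Category.assoc, f, kernel.condition]
  have := mono_of_mono_fac (Abelian.monoLift_comp M.arrow _ hKM)
  obtain ⟨T, hT, hTK⟩ := σ.exists_subobject_map_eq (Abelian.monoLift M.arrow _ hKM) hK.1
  exact ⟨T, hT, by simpa only [phase, hTK] using hK.2⟩

section Discrete

variable {ε : ℝ} (hdisc : ∀ X : C, (σ.Z X).im ≠ 0 → ε ≤ |(σ.Z X).im|)
include hdisc

lemma im_add_le_of_phase_lt {E : C} {A : Subobject E} (hA : ¬ IsZero (A : C))
    (h : σ.phase E < σ.phase A) : (σ.Z A).im + ε ≤ (σ.Z E).im := by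
  have hsum := σ.map_eq_add_cokernel A.arrow
  have hQ : ¬ IsZero (cokernel A.arrow) := fun hQ => by
    rw [σ.map_eq_zero_of_isZero hQ, add_zero] at hsum
    exact h.ne (congrArg arg hsum)
  have hQim : (σ.Z (cokernel A.arrow)).im ≠ 0 := fun him => by
    have hπ : σ.phase (cokernel A.arrow) = Real.pi :=
      arg_eq_pi_of_mem_semiclosedUpperHalfPlane (σ.mem_semiclosedUpperHalfPlane _ hQ) him
    have := (σ.phase_middle_lt_iff hsum hA hQ).1 h
    linarith [σ.phase_le_pi A]
  have := hdisc _ hQim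
  rw [abs_of_nonneg (im_nonneg_of_mem_semiclosedUpperHalfPlane
    (σ.mem_semiclosedUpperHalfPlane _ hQ))] at this
  rw [hsum, add_im]
  linarith

lemma exists_isMaxPhaseSubobject_of_im_le [∀ X : C, IsNoetherianObject X] (N : ℕ) :
    ∀ E : C, ¬ IsZero E → (σ.Z E).im ≤ N * ε →
      ∃ M : Subobject E, σ.IsMaxPhaseSubobject M := by
  induction N with
  | zero =>
    intro E hE him
    have hπ : σ.phase E = Real.pi := arg_eq_pi_of_mem_semiclosedUpperHalfPlane
      (σ.mem_semiclosedUpperHalfPlane E hE) (le_antisymm (by simpa using him)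
        (im_nonneg_of_mem_semiclosedUpperHalfPlane (σ.mem_semiclosedUpperHalfPlane E hE)))
    exact ⟨⊤, isMaxPhaseSubobject_top hE fun B _ => hπ ▸ σ.phase_le_pi B⟩
  | succ N ih =>
    intro E hE him
    by_cases hS : ∃ B : Subobject E, ¬ IsZero (B : C) ∧ σ.phase E < σ.phase B
    swap
    · push Not at hS
      exact ⟨⊤, isMaxPhaseSubobject_top hE hS⟩
    obtain ⟨M, ⟨hM, hME⟩, hmax⟩ := wellFounded_gt.has_min _ hS
    have hQ := phase_lt_of_maximal hM hME fun P hMP hP => not_lt.1 fun h => hmax P ⟨hP, h⟩ hMP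
    obtain ⟨A, hA⟩ := ih M hM (by
      have := im_add_le_of_phase_lt hdisc hM hME
      push_cast at him
      linarith)
    -- A subobject of `M` of maximal phase also has maximal phase in `E`: by
    -- `exists_subobject_phase_le`, any `B ⊆ E` of larger phase has a subobject inside `M` of at
    -- least the phase of `B`.
    have hMA := hA.phase_le hM
    obtain ⟨T, hT, hTA⟩ := σ.exists_subobject_map_eq (A.arrow ≫ M.arrow) hA.1
    replace hTA : σ.phase T = σ.phase A := congrArg arg hTA
    refine ⟨T, hT, fun B hB => not_lt.1 fun hTB => ?_⟩
    obtain ⟨T', hT', hBT'⟩ := exists_subobject_phase_le M hB fun I hI => by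
      linarith [hQ I hI]
    linarith [hA.2 T' hT']

lemma exists_isMaxPhaseSubobject [∀ X : C, IsNoetherianObject X] (hε : 0 < ε) {E : C}
    (hE : ¬ IsZero E) : ∃ M : Subobject E, σ.IsMaxPhaseSubobject M :=
  exists_isMaxPhaseSubobject_of_im_le hdisc ⌈(σ.Z E).im / ε⌉₊ E hE
    ((div_le_iff₀ hε).1 (Nat.le_ceil _))

lemma exists_maxDestabilizing [∀ X : C, IsNoetherianObject X] (hε : 0 < ε) {E : C}
    (hE : ¬ IsZero E) :
    ∃ M : Subobject E, σ.IsMaxPhaseSubobject M ∧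
      ∀ I : Subobject (cokernel M.arrow), ¬ IsZero (I : C) → σ.phase I < σ.phase M := by
  obtain ⟨M, hM, hmax⟩ := wellFounded_gt.has_min {M | σ.IsMaxPhaseSubobject M}
    (exists_isMaxPhaseSubobject hdisc hε hE)
  refine ⟨M, hM, fun I hI => ?_⟩
  obtain ⟨P, hMP, hP, hIP⟩ := exists_gt_phase_lt (σ := σ) hM.1 hI
  have hPM : σ.phase P < σ.phase M := by
    by_contra! h
    exact hmax P ⟨hP, fun B hB => (hM.2 B hB).trans h⟩ hMP
  linarith [hIP hPM]

end Discrete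

end StabilityFunction

noncomputable def chainFactor {X : C} {n : ℕ} {s : Fin (n + 1) → Subobject X} (hs : Monotone s)
    (i : Fin n) : C :=
  cokernel (Subobject.ofLE (s i.castSucc) (s i.succ) (hs (Fin.castSucc_le_succ i)))

/-- A Harder–Narasimhan filtration of `X / A`, lifted to a chain of subobjects of `X` from `A`
to `⊤`. -/
structure HNChain (σ : StabilityFunction C) {X : C} (A : Subobject X) where
  n : ℕ
  s : Fin (n + 1) → Subobject X
  mono : Monotone s
  first : s 0 = A
  last : s (Fin.last n) = ⊤
  semistable : ∀ i, Semistable σ.Z (chainFactor mono i)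
  phase_lt : ∀ i j, i < j → σ.phase (chainFactor mono j) < σ.phase (chainFactor mono i)

namespace HNChain

variable {σ : StabilityFunction C} {X : C}

def nil : HNChain σ (⊤ : Subobject X) where
  n := 0
  s _ := ⊤
  mono := monotone_const
  first := rfl
  last := rfl
  semistable i := i.elim0
  phase_lt i := i.elim0

variable {A P : Subobject X} (c : HNChain σ P)

lemma mono_cons (hAP : A ≤ P) : Monotone (Fin.cons A c.s : Fin (c.n + 2) → Subobject X) := by
  refine Fin.monotone_iff_le_succ.2 fun i => ?_
  cases i using Fin.cases with
  | zero => simpa [c.first] using hAP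
  | succ i => exact c.mono (Fin.castSucc_le_succ i)

def cons (hAP : A ≤ P) (hA : Semistable σ.Z (cokernel (Subobject.ofLE A P hAP)))
    (hlt : ∀ i, σ.phase (chainFactor c.mono i) < σ.phase (cokernel (Subobject.ofLE A P hAP))) :
    HNChain σ A where
  n := c.n + 1
  s := Fin.cons A c.s
  mono := c.mono_cons hAP
  first := rfl
  last := c.last
  semistable i := by
    cases i using Fin.cases with
    | zero => exact σ.semistable_of_iso (Subobject.cokernelOfLECongr hAP c.first.symm) hA
    | succ i => exact c.semistable i
  phase_lt i j hij := by
    cases j using Fin.cases with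
    | zero => exact absurd hij (Fin.not_lt_zero i)
    | succ j =>
      cases i using Fin.cases with
      | zero => exact (σ.phase_iso (Subobject.cokernelOfLECongr hAP c.first.symm)) ▸ hlt j
      | succ i => exact c.phase_lt i j (Fin.succ_lt_succ_iff.1 hij)

end HNChain

-- The bound on the factors is the induction invariant: it makes the prepended factor the one of
-- largest phase.
theorem exists_hnChain [∀ X : C, IsNoetherianObject X] {σ : StabilityFunction C} {ε : ℝ}
    (hε : 0 < ε) (hdisc : ∀ E : C, (σ.Z E).im ≠ 0 → ε ≤ |(σ.Z E).im|) {X : C}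
    (A : Subobject X) :
    ∃ c : HNChain σ A, ∀ i, ∃ B : Subobject (cokernel A.arrow),
      ¬ IsZero (B : C) ∧ σ.phase (chainFactor c.mono i) ≤ σ.phase B := by
  induction A using WellFoundedGT.induction with
  | ind A ih =>
  by_cases hA : A = ⊤
  · subst hA
    exact ⟨.nil, fun i => i.elim0⟩
  obtain ⟨M, hM, hMQ⟩ :=
    StabilityFunction.exists_maxDestabilizing hdisc hε (Subobject.not_isZero_cokernel_arrow hA)
  obtain ⟨c, hc⟩ := ih _ (Subobject.lt_quotientPreimage A M hM.1)
  have e := Subobject.cokernelOfLEQuotientPreimageIso A M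
  have hcM : ∀ i, σ.phase (chainFactor c.mono i) < σ.phase M := fun i => by
    obtain ⟨B, hB, hcB⟩ := hc i
    obtain ⟨I, hI, hIB⟩ := σ.exists_subobject_map_eq
      (B.arrow ≫ (Subobject.cokernelQuotientPreimageIso A M).hom) hB
    have := hMQ I hI
    rw [StabilityFunction.phase, hIB] at this
    exact hcB.trans_lt this
  refine ⟨c.cons (Subobject.le_quotientPreimage A M) (σ.semistable_of_iso e.symm hM.semistable)
    fun i => σ.phase_iso e ▸ hcM i, fun i => ⟨M, hM.1, ?_⟩⟩
  cases i using Fin.cases with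
  | zero =>
    exact ((σ.phase_iso (Subobject.cokernelOfLECongr _ c.first)).trans (σ.phase_iso e)).le
  | succ i => exact (hcM i).le

/-- Bridgeland's criterion: let `Z` be an additive stability function on a Noetherian
abelian category `A` (i.e. `Z(E) ∈ ℝ_{>0}·e^{iπφ(E)}` with `φ(E) ∈ (0,1]` for every
nonzero `E`), and suppose the image of `Im Z` is a discrete subgroup of `ℝ`. Then every
nonzero object of `A` admits a Harder–Narasimhan filtration with respect to `Z`: a
filtration by subobjects whose factors are `Z`-semistable of strictly decreasing
phase. -/
theorem stmt_17 [∀ X : C, IsNoetherianObject X] (Z : C → ℂ)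
    (hadd : ∀ S : ShortComplex C, S.ShortExact → Z S.X₂ = Z S.X₁ + Z S.X₃)
    (hstab : ∀ X : C, ¬ Limits.IsZero X →
      0 < (Z X).im ∨ ((Z X).im = 0 ∧ (Z X).re < 0))
    (hdisc : ∃ ε : ℝ, 0 < ε ∧ ∀ X : C, (Z X).im ≠ 0 → ε ≤ |(Z X).im|) :
    ∀ X : C, ¬ Limits.IsZero X →
      ∃ Fl : SubobjectFiltration X,
        (∀ i, Semistable Z (Fl.factor i)) ∧
        ∀ i j : Fin Fl.n, i < j → phaseLT Z (Fl.factor j) (Fl.factor i) := by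
  obtain ⟨ε, hε, hdisc⟩ := hdisc
  let σ : StabilityFunction C := ⟨Z, hadd, hstab⟩
  intro X _
  obtain ⟨c, -⟩ := exists_hnChain (σ := σ) hε hdisc (⊥ : Subobject X)
  refine ⟨⟨c.n, c.s, c.mono, c.first, c.last⟩, c.semistable, fun i j hij => ?_⟩
  exact (σ.phaseLT_iff (c.semistable j).1 (c.semistable i).1).2 (c.phase_lt i j hij)
end
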